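/- Let X and Z be T×K real matrices with ZᵀX invertible, partitioned as X = [X₁, X₂], Z = [Z₁, Z₂] with K₁ + K₂ = K. Assume Z₂ᵀX₂ and Z₁ᵀM₂X₁ are invertible where M₂ = I − X₂(Z₂ᵀX₂)⁻¹Z₂ᵀ. Then the oblique residual projection M_Z = I − X(ZᵀX)⁻¹Zᵀ satisfies M_Z = M₂ − M₂X₁(Z₁ᵀM₂X₁)⁻¹Z₁ᵀM₂. -/

import Mathlib

/-!
Residualising `X₁` on `X₂` (and `Z₁` on `Z₂`, with the transposed projection `M₂ᵀ`) is a
unit-triangular column operation on `X` (and on `Z`), and `I − X(ZᵀX)⁻¹Zᵀ` is invariant under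
invertible column operations. After it the off-diagonal blocks `Z₁ᵀM₂X₂` and `Z₂ᵀM₂X₁` vanish,
so `ZᵀX` becomes block diagonal with blocks `Z₁ᵀM₂X₁` and `Z₂ᵀX₂`, and its inverse splits.
-/

open Matrix

noncomputable def obliqueResidual {R m n : Type*} [CommRing R] [Fintype m] [DecidableEq m]
    [Fintype n] [DecidableEq n] (X Z : Matrix m n R) : Matrix m m R :=
  1 - X * (Zᵀ * X)⁻¹ * Zᵀ

section ObliqueResidual

variable {R m n n₁ n₂ : Type*} [CommRing R] [Fintype m] [DecidableEq m] [Fintype n]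
  [DecidableEq n] [Fintype n₁] [DecidableEq n₁] [Fintype n₂] [DecidableEq n₂]

theorem obliqueResidual_mul_self {X Z : Matrix m n R} (h : IsUnit (Zᵀ * X)) :
    obliqueResidual X Z * X = 0 := by
  rw [obliqueResidual, Matrix.sub_mul, Matrix.one_mul, Matrix.mul_assoc, Matrix.mul_assoc,
    nonsing_inv_mul _ ((isUnit_iff_isUnit_det _).mp h), Matrix.mul_one, sub_self]

theorem transpose_mul_obliqueResidual {X Z : Matrix m n R} (h : IsUnit (Zᵀ * X)) :
    Zᵀ * obliqueResidual X Z = 0 := by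
  rw [obliqueResidual, Matrix.mul_sub, Matrix.mul_one, ← Matrix.mul_assoc, ← Matrix.mul_assoc,
    mul_nonsing_inv _ ((isUnit_iff_isUnit_det _).mp h), Matrix.one_mul, sub_self]

theorem isIdempotentElem_obliqueResidual {X Z : Matrix m n R} (h : IsUnit (Zᵀ * X)) :
    IsIdempotentElem (obliqueResidual X Z) := by
  rw [IsIdempotentElem]
  nth_rw 2 [obliqueResidual]
  rw [Matrix.mul_sub, Matrix.mul_one, ← Matrix.mul_assoc, ← Matrix.mul_assoc,
    obliqueResidual_mul_self h, Matrix.zero_mul, Matrix.zero_mul, sub_zero]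

theorem transpose_obliqueResidual (X Z : Matrix m n R) :
    (obliqueResidual X Z)ᵀ = obliqueResidual Z X := by
  simp only [obliqueResidual, transpose_sub, transpose_one, transpose_mul, transpose_transpose,
    transpose_nonsing_inv, Matrix.mul_assoc]

theorem obliqueResidual_mul_right (X Z : Matrix m n R) {E F : Matrix n n R}
    (hE : IsUnit E.det) (hF : IsUnit F.det) :
    obliqueResidual (X * E) (Z * F) = obliqueResidual X Z := by
  have hFt : IsUnit Fᵀ.det := by rwa [det_transpose]
  have hgram : (Z * F)ᵀ * (X * E) = Fᵀ * (Zᵀ * X) * E := by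
    simp only [transpose_mul, Matrix.mul_assoc]
  rw [obliqueResidual, obliqueResidual, hgram, Matrix.mul_inv_rev, Matrix.mul_inv_rev,
    transpose_mul]
  simp only [Matrix.mul_assoc]
  rw [mul_nonsing_inv_cancel_left _ _ hE, nonsing_inv_mul_cancel_left _ _ hFt]

theorem fromCols_obliqueResidual_mul (X₁ : Matrix m n₁ R) (X₂ Z₂ : Matrix m n₂ R) :
    fromCols (obliqueResidual X₂ Z₂ * X₁) X₂ =
      fromCols X₁ X₂ * fromBlocks (1 : Matrix n₁ n₁ R) 0 (-((Z₂ᵀ * X₂)⁻¹ * Z₂ᵀ * X₁)) 1 := by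
  rw [fromCols_mul_fromBlocks]
  simp only [obliqueResidual, sub_eq_add_neg, Matrix.add_mul, Matrix.neg_mul, Matrix.one_mul,
    Matrix.mul_one, Matrix.mul_zero, Matrix.mul_neg, Matrix.mul_assoc, zero_add]

theorem isUnit_det_fromBlocks_one_zero_one (C : Matrix n₂ n₁ R) :
    IsUnit (fromBlocks (1 : Matrix n₁ n₁ R) 0 C 1).det := by
  rw [det_fromBlocks_zero₁₂, det_one, det_one, mul_one]
  exact isUnit_one

theorem obliqueResidual_fromCols_of_cross_eq_zero {X₁ Z₁ : Matrix m n₁ R}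
    {X₂ Z₂ : Matrix m n₂ R} (h₁₂ : Z₁ᵀ * X₂ = 0) (h₂₁ : Z₂ᵀ * X₁ = 0)
    (h₁ : IsUnit (Z₁ᵀ * X₁)) (h₂ : IsUnit (Z₂ᵀ * X₂)) :
    obliqueResidual (fromCols X₁ X₂) (fromCols Z₁ Z₂) =
      obliqueResidual X₂ Z₂ - X₁ * (Z₁ᵀ * X₁)⁻¹ * Z₁ᵀ := by
  rw [obliqueResidual, transpose_fromCols, fromRows_mul_fromCols, h₁₂, h₂₁,
    inv_fromBlocks_zero₂₁_of_isUnit_iff _ _ _ (iff_of_true h₁ h₂)]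
  simp only [fromCols_mul_fromBlocks, fromCols_mul_fromRows, obliqueResidual, Matrix.mul_zero,
    Matrix.zero_mul, neg_zero, add_zero, zero_add]
  abel

theorem obliqueResidual_fromCols {X₁ Z₁ : Matrix m n₁ R} {X₂ Z₂ : Matrix m n₂ R}
    (h₂ : IsUnit (Z₂ᵀ * X₂)) (h₁ : IsUnit (Z₁ᵀ * obliqueResidual X₂ Z₂ * X₁)) :
    obliqueResidual (fromCols X₁ X₂) (fromCols Z₁ Z₂) =
      obliqueResidual X₂ Z₂ - obliqueResidual X₂ Z₂ * X₁ *
        (Z₁ᵀ * obliqueResidual X₂ Z₂ * X₁)⁻¹ * (Z₁ᵀ * obliqueResidual X₂ Z₂) := by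
  set M := obliqueResidual X₂ Z₂
  have hMt : Mᵀ = obliqueResidual Z₂ X₂ := transpose_obliqueResidual X₂ Z₂
  have hresid₁ : (Mᵀ * Z₁)ᵀ = Z₁ᵀ * M := by rw [transpose_mul, transpose_transpose]
  have hschur : (Mᵀ * Z₁)ᵀ * (M * X₁) = Z₁ᵀ * M * X₁ := by
    rw [hresid₁, Matrix.mul_assoc, ← Matrix.mul_assoc M, isIdempotentElem_obliqueResidual h₂,
      Matrix.mul_assoc]
  have hX : fromCols (M * X₁) X₂ =
      fromCols X₁ X₂ * fromBlocks (1 : Matrix n₁ n₁ R) 0 (-((Z₂ᵀ * X₂)⁻¹ * Z₂ᵀ * X₁)) 1 :=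
    fromCols_obliqueResidual_mul X₁ X₂ Z₂
  have hZ : fromCols (Mᵀ * Z₁) Z₂ =
      fromCols Z₁ Z₂ * fromBlocks (1 : Matrix n₁ n₁ R) 0 (-((X₂ᵀ * Z₂)⁻¹ * X₂ᵀ * Z₁)) 1 := by
    rw [hMt]
    exact fromCols_obliqueResidual_mul Z₁ Z₂ X₂
  have hcross₁₂ : (Mᵀ * Z₁)ᵀ * X₂ = 0 := by
    rw [hresid₁, Matrix.mul_assoc, obliqueResidual_mul_self h₂, Matrix.mul_zero]
  have hcross₂₁ : Z₂ᵀ * (M * X₁) = 0 := by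
    rw [← Matrix.mul_assoc, transpose_mul_obliqueResidual h₂, Matrix.zero_mul]
  calc obliqueResidual (fromCols X₁ X₂) (fromCols Z₁ Z₂)
      = obliqueResidual (fromCols (M * X₁) X₂) (fromCols (Mᵀ * Z₁) Z₂) := by
        rw [hX, hZ, obliqueResidual_mul_right _ _ (isUnit_det_fromBlocks_one_zero_one _)
          (isUnit_det_fromBlocks_one_zero_one _)]
    _ = M - M * X₁ * ((Mᵀ * Z₁)ᵀ * (M * X₁))⁻¹ * (Mᵀ * Z₁)ᵀ :=
        obliqueResidual_fromCols_of_cross_eq_zero hcross₁₂ hcross₂₁ (hschur ▸ h₁) h₂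
    _ = M - M * X₁ * (Z₁ᵀ * M * X₁)⁻¹ * (Z₁ᵀ * M) := by rw [hschur, hresid₁]

end ObliqueResidual

theorem oblique_residual_partialling_out_general {T K₁ K₂ : ℕ}
    (X₁ Z₁ : Matrix (Fin T) (Fin K₁) ℝ) (X₂ Z₂ : Matrix (Fin T) (Fin K₂) ℝ)
    (X Z : Matrix (Fin T) (Fin K₁ ⊕ Fin K₂) ℝ)
    (hXdef : X = fromCols X₁ X₂) (hZdef : Z = fromCols Z₁ Z₂)
    (M₂ MZ : Matrix (Fin T) (Fin T) ℝ)
    (hM₂ : M₂ = 1 - X₂ * (Z₂ᵀ * X₂)⁻¹ * Z₂ᵀ)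
    (hMZ : MZ = 1 - X * (Zᵀ * X)⁻¹ * Zᵀ)
    (hZ₂X₂ : IsUnit (Z₂ᵀ * X₂))
    (hZ₁M₂X₁ : IsUnit (Z₁ᵀ * M₂ * X₁)) :
    MZ = M₂ - M₂ * X₁ * (Z₁ᵀ * M₂ * X₁)⁻¹ * (Z₁ᵀ * M₂) := by
  subst hXdef hZdef hM₂ hMZ
  exact obliqueResidual_fromCols hZ₂X₂ hZ₁M₂X₁

/-- With `X = [X₁, X₂]`, `Z = [Z₁, Z₂]`, `M₂ = I − X₂(Z₂ᵀX₂)⁻¹Z₂ᵀ`, the oblique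
residual projection `M_Z = I − X(ZᵀX)⁻¹Zᵀ` satisfies
`M_Z = M₂ − M₂X₁(Z₁ᵀM₂X₁)⁻¹Z₁ᵀM₂`. -/
theorem oblique_residual_partialling_out {T K₁ K₂ : ℕ}
    (X₁ Z₁ : Matrix (Fin T) (Fin K₁) ℝ) (X₂ Z₂ : Matrix (Fin T) (Fin K₂) ℝ)
    (X Z : Matrix (Fin T) (Fin K₁ ⊕ Fin K₂) ℝ)
    (hXdef : X = fromCols X₁ X₂) (hZdef : Z = fromCols Z₁ Z₂)
    (M₂ MZ : Matrix (Fin T) (Fin T) ℝ)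
    (hM₂ : M₂ = 1 - X₂ * (Z₂ᵀ * X₂)⁻¹ * Z₂ᵀ)
    (hMZ : MZ = 1 - X * (Zᵀ * X)⁻¹ * Zᵀ)
    (hZX : IsUnit (Zᵀ * X)) (hZ₂X₂ : IsUnit (Z₂ᵀ * X₂))
    (hZ₁M₂X₁ : IsUnit (Z₁ᵀ * M₂ * X₁)) :
    MZ = M₂ - M₂ * X₁ * (Z₁ᵀ * M₂ * X₁)⁻¹ * (Z₁ᵀ * M₂) :=
  oblique_residual_partialling_out_general X₁ Z₁ X₂ Z₂ X Z hXdef hZdef M₂ MZ hM₂ hMZ hZ₂X₂ hZ₁M₂X₁
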